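/- Let G be a connected claw-free graph with maximum degree Δ(G) = 3 that contains no A_i for any i of the form i = 3j+1 (j a positive integer). If G has a vertex of degree 1, then G has a dynamic 3-coloring. -/

import Mathlib

open SimpleGraph

/-- A dynamic `k`-coloring of `G`: a proper vertex coloring such that every vertex
with at least two neighbors sees at least two distinct colors among its neighbors. -/
def IsDynamicColoring {V : Type*} (G : SimpleGraph V) (k : ℕ) (c : V → Fin k) : Prop :=
  (∀ ⦃u v : V⦄, G.Adj u v → c u ≠ c v) ∧
  ∀ v : V, 2 ≤ (G.neighborSet v).ncard →
    ∃ u w : V, G.Adj v u ∧ G.Adj v w ∧ c u ≠ c w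

/-- The dynamic chromatic number: the least `k` admitting a dynamic `k`-coloring. -/
noncomputable def dynamicChromaticNumber {V : Type*} (G : SimpleGraph V) : ℕ :=
  sInf {k : ℕ | ∃ c : V → Fin k, IsDynamicColoring G k c}

/-- `G` is claw-free: no induced subgraph isomorphic to `K_{1,3}`. -/
def ClawFree {V : Type*} (G : SimpleGraph V) : Prop :=
  ¬ ∃ v a b c : V, a ≠ b ∧ a ≠ c ∧ b ≠ c ∧
    G.Adj v a ∧ G.Adj v b ∧ G.Adj v c ∧ ¬ G.Adj a b ∧ ¬ G.Adj a c ∧ ¬ G.Adj b c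

/-- `G` contains an `A_i`: a path on `i` vertices whose `i - 2` internal vertices have
degree 2 in `G` and whose two end-vertices have degree 3 in `G`. -/
def HasAPath {V : Type*} (G : SimpleGraph V) (i : ℕ) : Prop :=
  ∃ v : ℕ → V,
    (∀ a b : ℕ, a < i → b < i → v a = v b → a = b) ∧
    (∀ a : ℕ, a + 1 < i → G.Adj (v a) (v (a + 1))) ∧
    (∀ a : ℕ, 0 < a → a + 1 < i → (G.neighborSet (v a)).ncard = 2) ∧
    (G.neighborSet (v 0)).ncard = 3 ∧
    (G.neighborSet (v (i - 1))).ncard = 3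

/-!
A *thread* is a walk that leaves a vertex through an edge and then keeps going through vertices
of degree 2 without turning back, until it reaches a vertex of degree 1 or 3. A proper colouring
with values in `ZMod 3` is dynamic as soon as it is an arithmetic progression with nonzero step
along every thread: a vertex of degree 2 then sees the colours `c - d` and `c + d`, and a vertex
of degree 3 has two adjacent neighbours because `G` is claw-free.

Such a colouring is built in two steps. First the vertices of degree 3 are coloured properly for
the graph joining the two ends of each thread; colouring them greedily, farthest from a vertex of
degree 1 first, every vertex has at most two neighbours coloured before it. Then each thread is
filled in. Between distinct ends of degree 3 the step is the difference of their colours divided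
by the length `n` of the thread; this is possible since the thread is an `A_(n+1)`, so `3 ∤ n`.
A thread returning to its start is a triangle by claw-freeness, and a thread with an end of
degree 1 uses the step `±1`.
-/

theorem ClawFree.exists_adj_adj_adj {V : Type*} {G : SimpleGraph V} (hclaw : ClawFree G) {v : V}
    (h3 : (G.neighborSet v).ncard = 3) : ∃ p q, G.Adj v p ∧ G.Adj v q ∧ G.Adj p q := by
  obtain ⟨a, b, c, hab, hac, hbc, hN⟩ := Set.ncard_eq_three.mp h3
  have hadj : ∀ {w}, w ∈ ({a, b, c} : Set V) → G.Adj v w := fun hw => by rwa [← hN] at hw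
  by_contra! h
  exact hclaw ⟨v, a, b, c, hab, hac, hbc, hadj (by simp), hadj (by simp), hadj (by simp),
    h a b (hadj (by simp)) (hadj (by simp)), h a c (hadj (by simp)) (hadj (by simp)),
    h b c (hadj (by simp)) (hadj (by simp))⟩

namespace SimpleGraph

variable {V : Type*}

theorem Connected.mem_of_forall_adj_mem {G : SimpleGraph V} (hconn : G.Connected) {T : Set V}
    (hT : T.Nonempty) (hadj : ∀ x ∈ T, ∀ y, G.Adj x y → y ∈ T) (w : V) : w ∈ T := by
  obtain ⟨v, hv⟩ := hT
  obtain ⟨p⟩ := hconn.preconnected v w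
  induction p with
  | nil => exact hv
  | cons h _ ih => exact ih (hadj _ hv _ h)

theorem Connected.exists_adj_dist_lt {G : SimpleGraph V} (hconn : G.Connected) {v r : V}
    (hv : v ≠ r) : ∃ w, G.Adj v w ∧ G.dist w r < G.dist v r := by
  obtain ⟨p, hp⟩ := hconn.exists_walk_length_eq_dist v r
  cases p with
  | nil => exact absurd rfl hv
  | cons h q =>
    rw [Walk.length_cons] at hp
    exact ⟨_, h, (dist_le q).trans_lt (by omega)⟩

theorem colorable_succ_of_forall_ncard_le [Finite V] (H : SimpleGraph V) (f : V → ℕ) {k : ℕ}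
    (h : ∀ a, {b | H.Adj a b ∧ f a ≤ f b}.ncard ≤ k) : H.Colorable (k + 1) := by
  classical
  have := Fintype.ofFinite V
  suffices ∀ s : Finset V,
      ∃ c : V → Fin (k + 1), ∀ a ∈ s, ∀ b ∈ s, H.Adj a b → c a ≠ c b by
    obtain ⟨c, hc⟩ := this Finset.univ
    exact ⟨Coloring.mk c fun hab => hc _ (Finset.mem_univ _) _ (Finset.mem_univ _) hab⟩
  intro s
  induction s using Finset.strongInduction with
  | H s ih =>
    rcases s.eq_empty_or_nonempty with rfl | hs
    · exact ⟨fun _ => 0, by simp⟩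
    -- colour a vertex of least `f` last: its neighbours in `s` are all counted in `h`
    obtain ⟨a, has, hmin⟩ := s.exists_min_image f hs
    obtain ⟨c, hc⟩ := ih _ (Finset.erase_ssubset has)
    obtain ⟨i, hi⟩ : ∃ i, i ∉ c '' {b | H.Adj a b ∧ f a ≤ f b} := by
      by_contra! hall
      have := (Set.ncard_le_ncard (s := Set.univ) (fun i _ => hall i)).trans
        ((Set.ncard_image_le (Set.toFinite _)).trans (h a))
      simp [Set.ncard_univ] at this
    have hfresh : ∀ b ∈ s, H.Adj a b → i ≠ c b := fun b hb hab hib =>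
      hi ⟨b, ⟨hab, hmin b hb⟩, hib.symm⟩
    refine ⟨Function.update c a i, fun x hx y hy hxy => ?_⟩
    rcases eq_or_ne x a with rfl | hxa
    · rw [Function.update_self, Function.update_of_ne (H.ne_of_adj hxy).symm]
      exact hfresh y hy hxy
    rcases eq_or_ne y a with rfl | hya
    · rw [Function.update_self, Function.update_of_ne hxa]
      exact (hfresh x hx hxy.symm).symm
    rw [Function.update_of_ne hxa, Function.update_of_ne hya]
    exact hc x (Finset.mem_erase.mpr ⟨hxa, hx⟩) y (Finset.mem_erase.mpr ⟨hya, hy⟩) hxy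

variable (G : SimpleGraph V)

local notation "deg " v:max => Set.ncard (SimpleGraph.neighborSet G v)

section Neighbors

variable {G} {v a b w : V}

theorem eq_or_eq_of_deg_eq_two (h2 : deg v = 2) (ha : G.Adj v a) (hb : G.Adj v b)
    (hab : a ≠ b) (hw : G.Adj v w) : w = a ∨ w = b := by
  obtain ⟨x, y, -, hN⟩ := Set.ncard_eq_two.mp h2
  rw [← mem_neighborSet, hN] at ha hb hw
  simp only [Set.mem_insert_iff, Set.mem_singleton_iff] at ha hb hw
  grind

theorem eq_of_deg_eq_one (h1 : deg v = 1) (ha : G.Adj v a) (hb : G.Adj v b) :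
    a = b := by
  obtain ⟨x, hN⟩ := Set.ncard_eq_one.mp h1
  rw [← mem_neighborSet, hN] at ha hb
  exact ha.trans hb.symm

theorem exists_adj_ne_of_deg_eq_two (h2 : deg v = 2) (ha : G.Adj v a) :
    ∃ w, G.Adj v w ∧ w ≠ a := by
  obtain ⟨x, y, hxy, hN⟩ := Set.ncard_eq_two.mp h2
  rw [← mem_neighborSet, hN] at ha
  have hx : G.Adj v x := by rw [← mem_neighborSet, hN]; simp
  have hy : G.Adj v y := by rw [← mem_neighborSet, hN]; simp
  rcases ha with rfl | rfl
  · exact ⟨y, hy, hxy.symm⟩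
  · exact ⟨x, hx, hxy⟩

theorem exists_adj_ne_ne_of_deg_eq_three (h3 : deg v = 3) (a b : V) :
    ∃ w, G.Adj v w ∧ w ≠ a ∧ w ≠ b := by
  by_contra! h
  have : G.neighborSet v ⊆ {a, b} := fun w hw => by
    by_cases hwa : w = a
    · simp [hwa]
    · simp [h w hw hwa]
  have := (Set.ncard_le_ncard this).trans (Set.ncard_insert_le a {b})
  simp at this
  omega

theorem deg_eq_one_or_eq_three [Finite V] (hmax : ∀ v, deg v ≤ 3) (hv : deg v ≠ 2)
    (hw : G.Adj v w) : deg v = 1 ∨ deg v = 3 := by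
  have := (Set.ncard_pos (s := G.neighborSet v) (Set.toFinite _)).mpr ⟨w, hw⟩
  have := hmax v
  omega

end Neighbors

open Classical in
noncomputable def someNeighbor (v : V) : V :=
  if h : ∃ w, G.Adj v w then h.choose else v

open Classical in
noncomputable def otherNeighbor (v u : V) : V :=
  if h : ∃ w, G.Adj v w ∧ w ≠ u then h.choose else v

variable {G} {v u w : V}

theorem adj_someNeighbor (h : G.Adj v w) : G.Adj v (G.someNeighbor v) := by
  have hex : ∃ w, G.Adj v w := ⟨w, h⟩
  rw [someNeighbor, dif_pos hex]
  exact hex.choose_spec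

theorem adj_otherNeighbor (h2 : deg v = 2) (hu : G.Adj v u) :
    G.Adj v (G.otherNeighbor v u) ∧ G.otherNeighbor v u ≠ u := by
  have hex := exists_adj_ne_of_deg_eq_two h2 hu
  rw [otherNeighbor, dif_pos hex]
  exact hex.choose_spec

theorem otherNeighbor_eq (h2 : deg v = 2) (hu : G.Adj v u) (hw : G.Adj v w) (hwu : w ≠ u) :
    G.otherNeighbor v u = w := by
  obtain ⟨ho, hou⟩ := adj_otherNeighbor h2 hu
  exact ((eq_or_eq_of_deg_eq_two h2 hu ho hou.symm hw).resolve_left hwu).symm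

variable (G)

noncomputable def thread (s x : V) : ℕ → V
  | 0 => s
  | 1 => x
  | n + 2 => G.otherNeighbor (thread s x (n + 1)) (thread s x n)

noncomputable def threadLength (s x : V) : ℕ :=
  sInf {k | 0 < k ∧ deg (G.thread s x k) ≠ 2}

noncomputable def threadEnd (s x : V) : V :=
  G.thread s x (G.threadLength s x)

variable {G} {s x : V}

@[simp] theorem thread_zero : G.thread s x 0 = s := rfl

@[simp] theorem thread_one : G.thread s x 1 = x := rfl

theorem thread_add_two (k : ℕ) :
    G.thread s x (k + 2) = G.otherNeighbor (G.thread s x (k + 1)) (G.thread s x k) := rfl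

theorem thread_succ (k : ℕ) : G.thread s x (k + 1) = G.thread x (G.otherNeighbor x s) k := by
  induction k using Nat.strong_induction_on with
  | _ k ih =>
    match k, ih with
    | 0, _ => rfl
    | 1, _ => rfl
    | k + 2, ih => rw [thread_add_two, ih (k + 1) (by omega), ih k (by omega)]; rfl

theorem thread_add (i j : ℕ) :
    G.thread s x (i + j) = G.thread (G.thread s x i) (G.thread s x (i + 1)) j := by
  induction i generalizing s x with
  | zero => simp
  | succ i ih => rw [add_right_comm, thread_succ, ih, ← thread_succ, ← thread_succ]

theorem threadLength_eq {k : ℕ} (hk : 0 < k)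
    (hint : ∀ i, 0 < i → i < k → deg (G.thread s x i) = 2)
    (hend : deg (G.thread s x k) ≠ 2) :
    G.threadLength s x = k :=
  le_antisymm (Nat.sInf_le ⟨hk, hend⟩)
    (le_csInf ⟨k, hk, hend⟩ fun _ ⟨hj, hj'⟩ => not_lt.mp fun hlt => hj' (hint _ hj hlt))

theorem threadEnd_of_deg_ne_two (hx : deg x ≠ 2) : G.threadEnd s x = x := by
  rw [threadEnd, threadLength_eq one_pos (by omega) hx, thread_one]

theorem adj_thread (hsx : G.Adj s x) {k : ℕ}
    (hint : ∀ i, 0 < i → i ≤ k → deg (G.thread s x i) = 2) :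
    G.Adj (G.thread s x k) (G.thread s x (k + 1)) := by
  induction k with
  | zero => exact hsx
  | succ k ih =>
    exact (adj_otherNeighbor (hint _ k.succ_pos le_rfl)
      (ih fun i hi hik => hint i hi (by omega)).symm).1

theorem thread_add_two_ne {k : ℕ} (hk : G.Adj (G.thread s x k) (G.thread s x (k + 1)))
    (h2 : deg (G.thread s x (k + 1)) = 2) : G.thread s x (k + 2) ≠ G.thread s x k :=
  (adj_otherNeighbor h2 hk.symm).2

theorem eq_or_eq_of_adj_thread {k : ℕ} (hk : G.Adj (G.thread s x k) (G.thread s x (k + 1)))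
    (h2 : deg (G.thread s x (k + 1)) = 2) (hw : G.Adj (G.thread s x (k + 1)) w) :
    w = G.thread s x k ∨ w = G.thread s x (k + 2) :=
  eq_or_eq_of_deg_eq_two h2 hk.symm (adj_otherNeighbor h2 hk.symm).1
    (adj_otherNeighbor h2 hk.symm).2.symm hw

theorem eq_zero_of_thread_eq_of_minimal (hsx : G.Adj s x) {i j : ℕ}
    (hint : ∀ k, 0 < k → k < j → deg (G.thread s x k) = 2) (hij : i < j)
    (heq : G.thread s x i = G.thread s x j)
    (hmin : ∀ i' j', i' < j' → j' < j → G.thread s x i' ≠ G.thread s x j') : i = 0 := by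
  by_contra hi
  obtain ⟨i, rfl⟩ : ∃ i', i = i' + 1 := ⟨i - 1, by omega⟩
  obtain ⟨j, rfl⟩ : ∃ j', j = j' + 1 := ⟨j - 1, by omega⟩
  have hadj : ∀ k, k ≤ j → G.Adj (G.thread s x k) (G.thread s x (k + 1)) := fun k hk =>
    adj_thread hsx fun m hm hmk => hint m hm (by omega)
  -- position `j` precedes a repetition of position `i + 1`, so it repeats `i` or `i + 2`
  have hlast : G.Adj (G.thread s x (i + 1)) (G.thread s x j) := heq ▸ (hadj j le_rfl).symm
  rcases eq_or_eq_of_adj_thread (hadj i (by omega)) (hint _ (by omega) (by omega)) hlast with h | h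
  · exact hmin i j (by omega) (by omega) h.symm
  rcases lt_trichotomy (i + 2) j with hlt | rfl | hgt
  · exact hmin (i + 2) j hlt (by omega) h.symm
  · exact thread_add_two_ne (hadj (i + 1) (by omega)) (hint _ (by omega) (by omega)) heq.symm
  · obtain rfl : j = i + 1 := by omega
    exact G.ne_of_adj (hadj _ le_rfl) h

theorem deg_thread_eq_two {i : ℕ} (h0 : 0 < i) (hi : i < G.threadLength s x) :
    deg (G.thread s x i) = 2 := by
  by_contra h
  exact Nat.notMem_of_lt_sInf hi ⟨h0, h⟩

theorem adj_thread_of_lt (hsx : G.Adj s x) {i : ℕ} (hi : i < G.threadLength s x) :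
    G.Adj (G.thread s x i) (G.thread s x (i + 1)) :=
  adj_thread hsx fun _ hj hji => deg_thread_eq_two hj (by omega)

theorem thread_thread_sub (hsx : G.Adj s x) {i j : ℕ} (hi : i ≤ G.threadLength s x)
    (hj : j ≤ i) :
    G.thread (G.thread s x i) (G.thread s x (i - 1)) j = G.thread s x (i - j) := by
  induction j using Nat.strong_induction_on with
  | _ j ih =>
    match j, ih, hj with
    | 0, _, _ => simp
    | 1, _, _ => simp
    | j + 2, ih, hj =>
      rw [thread_add_two, ih (j + 1) (by omega) (by omega), ih j (by omega) (by omega)]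
      obtain ⟨m, hm⟩ : ∃ m, i - (j + 2) = m := ⟨_, rfl⟩
      rw [show i - (j + 1) = m + 1 by omega, show i - j = m + 2 by omega, hm]
      exact otherNeighbor_eq (deg_thread_eq_two (by omega) (by omega))
        (adj_thread_of_lt hsx (by omega)) (adj_thread_of_lt hsx (by omega)).symm
        (thread_add_two_ne (adj_thread_of_lt hsx (by omega))
          (deg_thread_eq_two (by omega) (by omega))).symm

theorem threadLength_thread_sub_one (hsx : G.Adj s x) (hs : deg s ≠ 2) {i : ℕ} (h0 : 0 < i)
    (hi : i ≤ G.threadLength s x) :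
    G.threadLength (G.thread s x i) (G.thread s x (i - 1)) = i :=
  threadLength_eq h0
    (fun j hj hji => by
      rw [thread_thread_sub hsx hi hji.le]; exact deg_thread_eq_two (by omega) (by omega))
    (by rwa [thread_thread_sub hsx hi le_rfl, Nat.sub_self])

theorem threadEnd_thread_sub_one (hsx : G.Adj s x) (hs : deg s ≠ 2) {i : ℕ} (h0 : 0 < i)
    (hi : i ≤ G.threadLength s x) : G.threadEnd (G.thread s x i) (G.thread s x (i - 1)) = s := by
  rw [threadEnd, threadLength_thread_sub_one hsx hs h0 hi, thread_thread_sub hsx hi le_rfl,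
    Nat.sub_self, thread_zero]

theorem eq_zero_and_eq_threadLength_of_thread_eq (hsx : G.Adj s x) (hs : deg s ≠ 2) {i j : ℕ}
    (hij : i < j) (hj : j ≤ G.threadLength s x) (heq : G.thread s x i = G.thread s x j) :
    i = 0 ∧ j = G.threadLength s x := by
  classical
  have hback : ∀ m, 0 < m → m ≤ G.threadLength s x → G.thread s x m = s →
      m = G.threadLength s x := fun m hm hmN hms => by
    by_contra hne
    exact hs (hms ▸ deg_thread_eq_two hm (by omega))
  have hP : ∃ j', j' ≤ G.threadLength s x ∧ ∃ i' < j', G.thread s x i' = G.thread s x j' :=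
    ⟨j, hj, i, hij, heq⟩
  obtain ⟨hj₀, i₀, hi₀, heq₀⟩ := Nat.find_spec hP
  obtain rfl := eq_zero_of_thread_eq_of_minimal hsx
    (fun k hk hkj => deg_thread_eq_two hk (by omega)) hi₀ heq₀
    fun i' j' h h' heq' => Nat.find_min hP h' ⟨by omega, i', h, heq'⟩
  have hj₀N := hback _ hi₀ hj₀ heq₀.symm
  have hjN : j = G.threadLength s x :=
    le_antisymm hj (hj₀N ▸ Nat.find_min' hP ⟨hj, i, hij, heq⟩)
  refine ⟨Nat.eq_zero_of_not_pos fun hi => ?_, hjN⟩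
  have := hback i hi (by omega) (by rw [heq, hjN, ← hj₀N, ← heq₀, thread_zero])
  omega

theorem eq_zero_or_add_two_eq_of_adj_thread (hsx : G.Adj s x) (hs : deg s ≠ 2) {i : ℕ}
    (hi : i + 1 < G.threadLength s x) (h : G.Adj s (G.thread s x (i + 1))) :
    i = 0 ∨ i + 2 = G.threadLength s x := by
  rcases eq_or_eq_of_adj_thread (adj_thread_of_lt hsx (by omega)) (deg_thread_eq_two (by omega) hi)
    h.symm with h | h
  · rcases Nat.eq_zero_or_pos i with hi0 | hi0
    · exact Or.inl hi0
    · have := (eq_zero_and_eq_threadLength_of_thread_eq hsx hs (i := 0) hi0 (by omega) h).2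
      omega
  · exact Or.inr
      (eq_zero_and_eq_threadLength_of_thread_eq hsx hs (i := 0) (by omega) (by omega) h).2

theorem not_three_dvd_threadLength (hA : ∀ j : ℕ, 0 < j → ¬ HasAPath G (3 * j + 1))
    (hsx : G.Adj s x) (h3s : deg s = 3) (h3e : deg (G.threadEnd s x) = 3)
    (hne : G.threadEnd s x ≠ s) : ¬ 3 ∣ G.threadLength s x := by
  rintro ⟨j, hj⟩
  have hN : 0 < G.threadLength s x :=
    Nat.pos_of_ne_zero fun h => hne (by rw [threadEnd, h, thread_zero])
  refine hA j (by omega) ⟨G.thread s x, fun a b ha hb hab => ?_, fun a ha => ?_,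
    fun a ha hai => deg_thread_eq_two ha (by omega), h3s, ?_⟩
  · rcases lt_trichotomy a b with h | h | h
    · obtain ⟨rfl, rfl⟩ :=
        eq_zero_and_eq_threadLength_of_thread_eq hsx (by omega) h (by omega) hab
      exact absurd hab.symm hne
    · exact h
    · obtain ⟨rfl, rfl⟩ :=
        eq_zero_and_eq_threadLength_of_thread_eq hsx (by omega) h (by omega) hab.symm
      exact absurd hab hne
  · exact adj_thread_of_lt hsx (by omega)
  · rwa [show 3 * j + 1 - 1 = G.threadLength s x by omega]

section ThreadEnds

variable [Finite V] (hconn : G.Connected) (hdeg : ∃ w, (G.neighborSet w).ncard ≠ 2)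
include hconn hdeg

theorem exists_deg_thread_ne_two (hsx : G.Adj s x) :
    ∃ k, 0 < k ∧ deg (G.thread s x k) ≠ 2 := by
  classical
  by_contra! hall
  have hP : ∃ j, ∃ i < j, G.thread s x i = G.thread s x j := by
    obtain ⟨i, j, hij, heq⟩ := Finite.exists_ne_map_eq_of_infinite (G.thread s x)
    rcases hij.lt_or_gt with h | h
    · exact ⟨j, i, h, heq⟩
    · exact ⟨i, j, h, heq.symm⟩
  obtain ⟨i, hij, heq⟩ := Nat.find_spec hP
  obtain rfl := eq_zero_of_thread_eq_of_minimal hsx (fun k hk _ => hall k hk) hij heq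
    fun i' j' hij' hj' h => Nat.find_min hP hj' ⟨i', hij', h⟩
  -- the thread returns to `s`, so its vertices form a component of degree-2 vertices
  have hpos : ∀ y ∈ Set.range (G.thread s x), ∃ k, 0 < k ∧ G.thread s x k = y := by
    rintro _ ⟨k, rfl⟩
    rcases Nat.eq_zero_or_pos k with rfl | hk
    · exact ⟨_, hij, heq.symm⟩
    · exact ⟨k, hk, rfl⟩
  have hclosed :
      ∀ y ∈ Set.range (G.thread s x), ∀ z, G.Adj y z → z ∈ Set.range (G.thread s x) := by
    rintro y hy z hz
    obtain ⟨k, hk, rfl⟩ := hpos y hy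
    obtain ⟨k, rfl⟩ : ∃ k', k = k' + 1 := ⟨k - 1, by omega⟩
    rcases eq_or_eq_of_adj_thread (adj_thread hsx fun i hi _ => hall i hi) (hall _ hk) hz with
      rfl | rfl
    · exact ⟨k, rfl⟩
    · exact ⟨k + 2, rfl⟩
  obtain ⟨w, hw⟩ := hdeg
  obtain ⟨k, hk, rfl⟩ := hpos w (hconn.mem_of_forall_adj_mem (Set.range_nonempty _) hclosed w)
  exact hw (hall k hk)

theorem threadLength_pos (hsx : G.Adj s x) : 0 < G.threadLength s x :=
  (Nat.sInf_mem (exists_deg_thread_ne_two hconn hdeg hsx)).1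

theorem deg_threadEnd_ne_two (hsx : G.Adj s x) : deg (G.threadEnd s x) ≠ 2 :=
  (Nat.sInf_mem (exists_deg_thread_ne_two hconn hdeg hsx)).2

theorem threadLength_thread (hsx : G.Adj s x) {i : ℕ} (hi : i < G.threadLength s x) :
    G.threadLength (G.thread s x i) (G.thread s x (i + 1)) = G.threadLength s x - i := by
  refine threadLength_eq (by omega) (fun j hj hjN => ?_) ?_ <;> rw [← thread_add]
  · exact deg_thread_eq_two (by omega) (by omega)
  · rw [Nat.add_sub_cancel' hi.le]
    exact deg_threadEnd_ne_two hconn hdeg hsx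

theorem threadEnd_thread (hsx : G.Adj s x) {i : ℕ} (hi : i < G.threadLength s x) :
    G.threadEnd (G.thread s x i) (G.thread s x (i + 1)) = G.threadEnd s x := by
  rw [threadEnd, threadLength_thread hconn hdeg hsx hi, ← thread_add, Nat.add_sub_cancel' hi.le,
    threadEnd]

theorem exists_thread_through {v a b : V} (h2 : deg v = 2) (ha : G.Adj v a) (hb : G.Adj v b)
    (hab : a ≠ b) :
    ∃ y, G.Adj (G.threadEnd v a) y ∧
      G.thread (G.threadEnd v a) y (G.threadLength v a - 1) = a ∧
      G.thread (G.threadEnd v a) y (G.threadLength v a) = v ∧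
      G.thread (G.threadEnd v a) y (G.threadLength v a + 1) = b ∧
      G.threadLength (G.threadEnd v a) y = G.threadLength v a + G.threadLength v b ∧
      G.threadEnd (G.threadEnd v a) y = G.threadEnd v b := by
  set k := G.threadLength v a
  have hk := threadLength_pos hconn hdeg ha
  have hrev :
      ∀ j ≤ k, G.thread (G.threadEnd v a) (G.thread v a (k - 1)) j = G.thread v a (k - j) :=
    fun j hj => thread_thread_sub ha le_rfl hj
  have hv : G.thread (G.threadEnd v a) (G.thread v a (k - 1)) k = v := by
    rw [hrev k le_rfl, Nat.sub_self, thread_zero]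
  have ha' : G.thread (G.threadEnd v a) (G.thread v a (k - 1)) (k - 1) = a := by
    rw [hrev _ (by omega), show k - (k - 1) = 1 by omega, thread_one]
  have hb' : G.thread (G.threadEnd v a) (G.thread v a (k - 1)) (k + 1) = b := by
    rw [show k + 1 = k - 1 + 2 by omega, thread_add_two, show k - 1 + 1 = k by omega, hv, ha']
    exact otherNeighbor_eq h2 ha hb hab.symm
  have hshift :
      ∀ j, G.thread (G.threadEnd v a) (G.thread v a (k - 1)) (k + j) = G.thread v b j := by
    intro j
    rw [thread_add, hv, hb']
  have hlen : G.threadLength (G.threadEnd v a) (G.thread v a (k - 1)) = k + G.threadLength v b := by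
    refine threadLength_eq (by omega) (fun j hj hjN => ?_) ?_
    · rcases lt_trichotomy j k with hjk | rfl | hjk
      · rw [hrev j hjk.le]
        exact deg_thread_eq_two (by omega) (by omega)
      · rwa [hv]
      · rw [← Nat.add_sub_cancel' hjk.le, hshift]
        exact deg_thread_eq_two (by omega) (by omega)
    · rw [hshift]
      exact deg_threadEnd_ne_two hconn hdeg hb
  refine ⟨_, ?_, ha', hv, hb', hlen, by rw [threadEnd, hlen, hshift, threadEnd]⟩
  have := (adj_thread_of_lt ha (show k - 1 < k by omega)).symm
  rwa [show k - 1 + 1 = k by omega] at this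

theorem adj_threadEnd (hsx : G.Adj s x) :
    G.Adj (G.threadEnd s x) (G.thread s x (G.threadLength s x - 1)) := by
  have hN := threadLength_pos hconn hdeg hsx
  have := (adj_thread_of_lt hsx (show G.threadLength s x - 1 < G.threadLength s x by omega)).symm
  rwa [Nat.sub_add_cancel hN] at this

theorem threadLength_threadEnd (hs : deg s ≠ 2) (hsx : G.Adj s x) :
    G.threadLength (G.threadEnd s x) (G.thread s x (G.threadLength s x - 1)) =
      G.threadLength s x :=
  threadLength_thread_sub_one hsx hs (threadLength_pos hconn hdeg hsx) le_rfl

theorem threadEnd_threadEnd (hs : deg s ≠ 2) (hsx : G.Adj s x) :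
    G.threadEnd (G.threadEnd s x) (G.thread s x (G.threadLength s x - 1)) = s :=
  threadEnd_thread_sub_one hsx hs (threadLength_pos hconn hdeg hsx) le_rfl

theorem threadLength_eq_three_of_threadEnd_eq (hclaw : ClawFree G) (h3 : deg s = 3)
    (hsx : G.Adj s x) (hloop : G.threadEnd s x = s) : G.threadLength s x = 3 := by
  set N := G.threadLength s x
  have hN := threadLength_pos hconn hdeg hsx
  have hs : deg s ≠ 2 := by omega
  have hend : G.thread s x N = s := hloop
  have hadj : ∀ i < N, G.Adj (G.thread s x i) (G.thread s x (i + 1)) :=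
    fun i hi => adj_thread_of_lt hsx hi
  have hN1 : N ≠ 1 := fun h => G.ne_of_adj hsx (by rw [← hend, h, thread_one])
  have hN2 : N ≠ 2 := fun h => thread_add_two_ne (k := 0) hsx
    (deg_thread_eq_two one_pos (by omega)) (by rw [h] at hend; simpa using hend)
  by_contra hN3
  obtain ⟨m, hm⟩ : ∃ m, N = m + 4 := ⟨N - 4, by omega⟩
  have hy : G.Adj s (G.thread s x (m + 3)) := by
    have := (hadj (m + 3) (by omega)).symm
    rwa [show m + 3 + 1 = N by omega, hend] at this
  obtain ⟨z, hz, hzx, hzy⟩ := exists_adj_ne_ne_of_deg_eq_three h3 x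
    (G.thread s x (m + 3))
  have hxnbr : ∀ w, G.Adj x w → w = s ∨ w = G.thread s x 2 := fun w hw =>
    eq_or_eq_of_adj_thread (k := 0) hsx (deg_thread_eq_two one_pos (by omega)) hw
  have hynbr : ∀ w, G.Adj (G.thread s x (m + 3)) w → w = G.thread s x (m + 2) ∨ w = s :=
    fun w hw => by
      have := eq_or_eq_of_adj_thread (hadj _ (by omega))
        (deg_thread_eq_two (by omega) (by omega)) hw
      rwa [show m + 2 + 2 = N by omega, hend] at this
  refine hclaw ⟨s, x, G.thread s x (m + 3), z, fun h => ?_, hzx.symm, hzy.symm, hsx, hy, hz,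
    fun h => ?_, fun h => ?_, fun h => ?_⟩
  · exact one_ne_zero
      (eq_zero_and_eq_threadLength_of_thread_eq hsx hs (i := 1) (by omega) (by omega) h).1
  · rcases hxnbr _ h with h | h
    · exact G.ne_of_adj hy h.symm
    · exact two_ne_zero
        (eq_zero_and_eq_threadLength_of_thread_eq hsx hs (i := 2) (by omega) (by omega) h.symm).1
  · rcases hxnbr _ h with rfl | rfl
    · exact G.ne_of_adj hz rfl
    · have := eq_zero_or_add_two_eq_of_adj_thread hsx hs (i := 1) (by omega) hz
      omega
  · rcases hynbr _ h with rfl | rfl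
    · have := eq_zero_or_add_two_eq_of_adj_thread hsx hs (i := m + 1) (by omega) hz
      omega
    · exact G.ne_of_adj hz rfl

end ThreadEnds

variable (G) in
def branchGraph : SimpleGraph V :=
  fromRel fun a b => deg a = 3 ∧ deg b = 3 ∧ ∃ x, G.Adj a x ∧ G.threadEnd a x = b

theorem deg_le_two_of_deg_eq_one_of_deg_threadEnd_eq_one [Finite V] (hconn : G.Connected)
    (hsx : G.Adj s x) (h1s : deg s = 1) (h1e : deg (G.threadEnd s x) = 1) (w : V) :
    deg w ≤ 2 := by
  have hN := threadLength_pos hconn ⟨s, by omega⟩ hsx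
  set T := {y | ∃ i ≤ G.threadLength s x, G.thread s x i = y}
  have hdegT : ∀ y ∈ T, deg y ≤ 2 := by
    rintro _ ⟨i, hi, rfl⟩
    rcases Nat.eq_zero_or_pos i with rfl | h0
    · rw [thread_zero, h1s]; omega
    rcases hi.lt_or_eq with hi | rfl
    · exact (deg_thread_eq_two h0 hi).le
    · exact h1e.trans_le (by omega)
  refine hdegT w (hconn.mem_of_forall_adj_mem (T := T) ⟨s, 0, Nat.zero_le _, rfl⟩ ?_ w)
  rintro _ ⟨i, hi, rfl⟩ z hz
  rcases Nat.eq_zero_or_pos i with rfl | h0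
  · exact ⟨1, hN, eq_of_deg_eq_one h1s hsx hz⟩
  obtain ⟨i, rfl⟩ : ∃ i', i = i' + 1 := ⟨i - 1, by omega⟩
  have hprev := (adj_thread_of_lt hsx (show i < G.threadLength s x by omega)).symm
  rcases hi.lt_or_eq with hi | hi
  · rcases eq_or_eq_of_adj_thread hprev.symm (deg_thread_eq_two h0 hi) hz with rfl | rfl
    · exact ⟨i, by omega, rfl⟩
    · exact ⟨i + 2, hi, rfl⟩
  · have h1 : deg (G.thread s x (i + 1)) = 1 := by rw [hi]; exact h1e
    exact ⟨i, by omega, eq_of_deg_eq_one h1 hprev hz⟩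

theorem dist_threadEnd_lt [Finite V] (hconn : G.Connected) {r : V} (hr : deg r ≠ 2)
    (hsx : G.Adj s x) (hx : G.dist x r < G.dist s r) : G.dist (G.threadEnd s x) r < G.dist s r := by
  have hN := threadLength_pos hconn ⟨r, hr⟩ hsx
  have key : ∀ i < G.threadLength s x,
      G.dist (G.thread s x (i + 1)) r < G.dist (G.thread s x i) r ∧
      G.dist (G.thread s x (i + 1)) r < G.dist s r := by
    intro i hi
    induction i with
    | zero => exact ⟨hx, hx⟩
    | succ i ih =>
      obtain ⟨ih₁, ih₂⟩ := ih (by omega)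
      have h2 := deg_thread_eq_two (Nat.succ_pos i) hi
      obtain ⟨w, hw, hwr⟩ := hconn.exists_adj_dist_lt (v := G.thread s x (i + 1)) (r := r)
        fun h => hr (h ▸ h2)
      rcases eq_or_eq_of_adj_thread (adj_thread_of_lt hsx (by omega)) h2 hw with rfl | rfl
      · omega
      · exact ⟨hwr, hwr.trans ih₂⟩
  have := (key _ (Nat.sub_lt hN one_pos)).2
  rwa [Nat.sub_add_cancel (Nat.one_le_iff_ne_zero.mpr hN.ne')] at this

theorem branchGraph_colorable [Finite V] (hconn : G.Connected) {r : V} (hr : deg r = 1) :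
    G.branchGraph.Colorable 3 := by
  have hnbr : ∀ a b, G.branchGraph.Adj a b → b ∈ G.threadEnd a '' G.neighborSet a := by
    intro a b hab
    rcases ((fromRel_adj _ _ _).mp hab).2 with ⟨-, -, x, hx, rfl⟩ | ⟨hb, -, y, hy, rfl⟩
    · exact ⟨x, hx, rfl⟩
    · exact ⟨_, adj_threadEnd hconn ⟨r, by omega⟩ hy,
        threadEnd_threadEnd hconn ⟨r, by omega⟩ (by omega) hy⟩
  refine colorable_succ_of_forall_ncard_le _ (fun a => G.dist a r) fun a => ?_
  by_cases ha : deg a = 3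
  · obtain ⟨y, hy, hyr⟩ := hconn.exists_adj_dist_lt (show a ≠ r by rintro rfl; omega)
    have hdesc := dist_threadEnd_lt hconn (by omega) hy hyr
    calc _ ≤ (G.threadEnd a '' (G.neighborSet a \ {y})).ncard := by
          refine Set.ncard_le_ncard ?_ (Set.toFinite _)
          rintro b ⟨hab, hle⟩
          obtain ⟨x, hx, rfl⟩ := hnbr a b hab
          refine ⟨x, ⟨hx, fun hxy => ?_⟩, rfl⟩
          rw [Set.mem_singleton_iff] at hxy
          subst hxy
          exact absurd hle (not_le.mpr hdesc)
      _ ≤ (G.neighborSet a \ {y}).ncard := Set.ncard_image_le (Set.toFinite _)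
      _ = 2 := by rw [Set.ncard_sdiff_singleton_of_mem (show y ∈ G.neighborSet a from hy), ha]
  · convert Nat.zero_le 2
    refine (Set.ncard_eq_zero (Set.toFinite _)).mpr
      (Set.eq_empty_of_forall_notMem fun b ⟨hab, _⟩ => ha ?_)
    rcases ((fromRel_adj _ _ _).mp hab).2 with ⟨h, -⟩ | ⟨-, h, -⟩ <;> exact h

section ThreadColoring

variable (G) (col : V → ZMod 3)

noncomputable def interpolate (e₁ : V) (k₁ : ℕ) (e₂ : V) (k₂ : ℕ) : ZMod 3 :=
  if deg e₁ = 3 ∧ deg e₂ = 3 then (k₂ * col e₁ + k₁ * col e₂) / (k₁ + k₂)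
  else if deg e₁ = 3 then col e₁ + k₁
  else if deg e₂ = 3 then col e₂ + k₂
  else 0

open Classical in
/-- When both sides of `v` end at the same vertex `t`, the thread is a triangle at `t` and its
two inner vertices get the two colours other than that of `t`, ordered by `WellOrderingRel`. -/
noncomputable def interiorColor (v a b : V) : ZMod 3 :=
  if G.threadEnd v a = G.threadEnd v b then
    col (G.threadEnd v a) + if WellOrderingRel v (if deg a = 2 then a else b) then 1 else 2
  else G.interpolate col (G.threadEnd v a) (G.threadLength v a) (G.threadEnd v b)
    (G.threadLength v b)

noncomputable def threadColoring (w : V) : ZMod 3 :=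
  if deg w = 2 then G.interiorColor col w (G.someNeighbor w) (G.otherNeighbor w (G.someNeighbor w))
  else if deg w = 1 then
    col (G.threadEnd w (G.someNeighbor w)) + G.threadLength w (G.someNeighbor w)
  else col w

def IsArithmeticAlong (c : V → ZMod 3) (s x : V) : Prop :=
  ∃ d ≠ 0, ∀ i ≤ G.threadLength s x, c (G.thread s x i) = c s + i * d

variable {G col}

theorem interpolate_comm (e₁ : V) (k₁ : ℕ) (e₂ : V) (k₂ : ℕ) :
    G.interpolate col e₁ k₁ e₂ k₂ = G.interpolate col e₂ k₂ e₁ k₁ := by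
  unfold interpolate
  by_cases h₁ : deg e₁ = 3 <;> by_cases h₂ : deg e₂ = 3 <;> simp [h₁, h₂, add_comm]

theorem threadColoring_of_deg_eq_three {v : V} (h3 : deg v = 3) :
    G.threadColoring col v = col v := by
  simp [threadColoring, h3]

theorem threadColoring_of_deg_eq_one {u p : V} (h1 : deg u = 1) (hp : G.Adj u p) :
    G.threadColoring col u = col (G.threadEnd u p) + G.threadLength u p := by
  rw [← eq_of_deg_eq_one h1 (adj_someNeighbor hp) hp]
  simp [threadColoring, h1]

theorem threadColoring_of_deg_eq_two {v a b : V} (h2 : deg v = 2) (ha : G.Adj v a)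
    (hb : G.Adj v b) (hab : a ≠ b) :
    G.threadColoring col v = G.interiorColor col v a b ∨
      G.threadColoring col v = G.interiorColor col v b a := by
  simp only [threadColoring, h2, if_true]
  rcases eq_or_eq_of_deg_eq_two h2 ha hb hab (adj_someNeighbor ha) with h | h <;>
    rw [h]
  · exact Or.inl (by rw [otherNeighbor_eq h2 ha hb hab.symm])
  · exact Or.inr (by rw [otherNeighbor_eq h2 hb ha hab])

theorem threadColoring_of_threadEnd_ne {v a b : V} (h2 : deg v = 2) (ha : G.Adj v a)
    (hb : G.Adj v b) (hab : a ≠ b) (hne : G.threadEnd v a ≠ G.threadEnd v b) :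
    G.threadColoring col v = G.interpolate col (G.threadEnd v a) (G.threadLength v a)
      (G.threadEnd v b) (G.threadLength v b) := by
  rcases threadColoring_of_deg_eq_two (col := col) h2 ha hb hab with h | h <;> rw [h]
  · exact if_neg hne
  · exact (if_neg hne.symm).trans (interpolate_comm _ _ _ _)

open Classical in
theorem threadColoring_of_threadEnd_eq {v a b : V} (h2 : deg v = 2) (ha : G.Adj v a)
    (hb : G.Adj v b) (hab : a ≠ b) (hloop : G.threadEnd v a = G.threadEnd v b) (ha2 : deg a ≠ 2)
    (hb2 : deg b = 2) :
    G.threadColoring col v = col (G.threadEnd v a) + if WellOrderingRel v b then 1 else 2 := by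
  rcases threadColoring_of_deg_eq_two (col := col) h2 ha hb hab with h | h <;>
    rw [h, interiorColor]
  · rw [if_pos hloop, if_neg ha2]
  · rw [if_pos hloop.symm, if_pos hb2, hloop]

section Progression

variable [Finite V] (hconn : G.Connected) (hdeg : ∃ w, (G.neighborSet w).ncard ≠ 2)
include hconn hdeg

theorem IsArithmeticAlong.of_reverse {c : V → ZMod 3} (hs : deg s ≠ 2) (hsx : G.Adj s x)
    (h : G.IsArithmeticAlong c (G.threadEnd s x) (G.thread s x (G.threadLength s x - 1))) :
    G.IsArithmeticAlong c s x := by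
  have hlen := threadLength_threadEnd hconn hdeg hs hsx
  set N := G.threadLength s x
  have hN := threadLength_pos hconn hdeg hsx
  obtain ⟨d, hd, hc⟩ := h
  have hrev : ∀ i ≤ N, G.thread (G.threadEnd s x) (G.thread s x (N - 1)) (N - i) =
      G.thread s x i := fun i hi => by
    rw [threadEnd, thread_thread_sub hsx le_rfl (Nat.sub_le _ _), Nat.sub_sub_self hi]
  have hcs := hc (N - 0) (by omega)
  rw [hrev 0 (Nat.zero_le _), thread_zero] at hcs
  refine ⟨-d, neg_ne_zero.mpr hd, fun i hi => ?_⟩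
  rw [← hrev i hi, hc (N - i) (by omega), hcs, Nat.cast_sub hi, Nat.sub_zero]
  ring

theorem threadColoring_thread (hsx : G.Adj s x) (hs : deg s ≠ 2) (hne : G.threadEnd s x ≠ s)
    {i : ℕ} (h0 : 0 < i) (hi : i < G.threadLength s x) :
    G.threadColoring col (G.thread s x i) =
      G.interpolate col s i (G.threadEnd s x) (G.threadLength s x - i) := by
  obtain ⟨i, rfl⟩ : ∃ i', i = i' + 1 := ⟨i - 1, by omega⟩
  have hprev := adj_thread_of_lt hsx (show i < G.threadLength s x by omega)
  have hnext := adj_thread_of_lt hsx hi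
  have h2 := deg_thread_eq_two h0 hi
  have hend := threadEnd_thread_sub_one hsx hs h0 hi.le
  have hlen := threadLength_thread_sub_one hsx hs h0 hi.le
  simp only [Nat.add_sub_cancel] at hend hlen
  rw [threadColoring_of_threadEnd_ne h2 hprev.symm hnext (thread_add_two_ne hprev h2).symm
    (by rw [hend, threadEnd_thread hconn hdeg hsx hi]; exact hne.symm), hend, hlen,
    threadEnd_thread hconn hdeg hsx hi, threadLength_thread hconn hdeg hsx hi]

theorem isArithmeticAlong_of_threadEnd_ne (hA : ∀ j : ℕ, 0 < j → ¬ HasAPath G (3 * j + 1))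
    (hcol : ∀ a b, G.branchGraph.Adj a b → col a ≠ col b) (hsx : G.Adj s x) (h3s : deg s = 3)
    (h3e : deg (G.threadEnd s x) = 3) (hne : G.threadEnd s x ≠ s) :
    G.IsArithmeticAlong (G.threadColoring col) s x := by
  have hN : (G.threadLength s x : ZMod 3) ≠ 0 := fun h =>
    not_three_dvd_threadLength hA hsx h3s h3e hne ((ZMod.natCast_eq_zero_iff _ _).mp h)
  have hse : col s ≠ col (G.threadEnd s x) :=
    hcol _ _ ((fromRel_adj _ _ _).mpr ⟨hne.symm, Or.inl ⟨h3s, h3e, x, hsx, rfl⟩⟩)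
  refine ⟨(col (G.threadEnd s x) - col s) / G.threadLength s x,
    div_ne_zero (sub_ne_zero.mpr hse.symm) hN, fun i hi => ?_⟩
  rw [threadColoring_of_deg_eq_three h3s]
  rcases Nat.eq_zero_or_pos i with rfl | h0
  · simp [threadColoring_of_deg_eq_three h3s]
  rcases hi.lt_or_eq with hi | rfl
  · rw [threadColoring_thread hconn hdeg hsx (by omega) hne h0 hi]
    simp only [interpolate, h3s, h3e, and_self, if_true]
    rw [Nat.cast_sub hi.le, add_sub_cancel]
    field_simp
    ring
  · rw [show G.thread s x (G.threadLength s x) = G.threadEnd s x from rfl,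
      threadColoring_of_deg_eq_three h3e]
    field_simp
    ring

theorem isArithmeticAlong_of_deg_threadEnd_eq_one (hsx : G.Adj s x) (h3s : deg s = 3)
    (h1e : deg (G.threadEnd s x) = 1) : G.IsArithmeticAlong (G.threadColoring col) s x := by
  set N := G.threadLength s x
  have hN := threadLength_pos hconn hdeg hsx
  have hne : G.threadEnd s x ≠ s := fun h => by rw [h] at h1e; omega
  refine ⟨1, one_ne_zero, fun i hi => ?_⟩
  rw [threadColoring_of_deg_eq_three h3s, mul_one]
  rcases Nat.eq_zero_or_pos i with rfl | h0
  · simp [threadColoring_of_deg_eq_three h3s]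
  rcases hi.lt_or_eq with hi | rfl
  · rw [threadColoring_thread hconn hdeg hsx (by omega) hne h0 hi]
    simp [interpolate, h3s, h1e]
  · rw [show G.thread s x N = G.threadEnd s x from rfl,
      threadColoring_of_deg_eq_one h1e (adj_threadEnd hconn hdeg hsx),
      threadEnd_threadEnd hconn hdeg (by omega) hsx,
      threadLength_threadEnd hconn hdeg (by omega) hsx]

theorem isArithmeticAlong_of_threadEnd_eq (hclaw : ClawFree G) (hsx : G.Adj s x) (h3s : deg s = 3)
    (hloop : G.threadEnd s x = s) : G.IsArithmeticAlong (G.threadColoring col) s x := by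
  classical
  have hN := threadLength_eq_three_of_threadEnd_eq hconn hdeg hclaw h3s hsx hloop
  have hs : deg s ≠ 2 := by omega
  have h2x : deg x = 2 := deg_thread_eq_two (s := s) (i := 1) one_pos (by omega)
  have h2y : deg (G.thread s x 2) = 2 := deg_thread_eq_two two_pos (by omega)
  have hxy : G.Adj x (G.thread s x 2) := adj_thread_of_lt hsx (i := 1) (by omega)
  have hys : G.Adj (G.thread s x 2) s := by
    have := adj_thread_of_lt hsx (i := 2) (by omega)
    rwa [show G.thread s x 3 = s from hN ▸ hloop] at this
  have hcx := threadColoring_of_threadEnd_eq (col := col) h2x hsx.symm hxy (G.ne_of_adj hys).symm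
    (by rw [threadEnd_of_deg_ne_two hs]
        exact hloop.symm.trans (threadEnd_thread hconn hdeg hsx (i := 1) (by omega)).symm) hs h2y
  have hcy := threadColoring_of_threadEnd_eq (col := col) h2y hys hxy.symm (G.ne_of_adj hsx)
    (by rw [threadEnd_of_deg_ne_two hs]
        exact (threadEnd_thread_sub_one hsx hs two_pos (by omega)).symm)
    hs h2x
  rw [threadEnd_of_deg_ne_two hs] at hcx hcy
  refine ⟨if WellOrderingRel x (G.thread s x 2) then 1 else 2, by split_ifs <;> decide,
    fun i hi => ?_⟩
  rw [threadColoring_of_deg_eq_three h3s]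
  rw [hN] at hi
  interval_cases i
  · simp [threadColoring_of_deg_eq_three h3s]
  · simpa using hcx
  · rw [hcy]
    rcases trichotomous_of WellOrderingRel x (G.thread s x 2) with h | h | h
    · rw [if_pos h, if_neg (asymm h)]; rfl
    · exact absurd h (G.ne_of_adj hxy)
    · rw [if_pos h, if_neg (asymm h)]; rfl
  · rw [show G.thread s x 3 = s from hN ▸ hloop, threadColoring_of_deg_eq_three h3s]
    push_cast
    rw [show (3 : ZMod 3) = 0 from rfl, zero_mul, add_zero]

theorem exists_thread_of_adj {u w : V} (huw : G.Adj u w) :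
    ∃ s x k, deg s ≠ 2 ∧ G.Adj s x ∧ k < G.threadLength s x ∧ G.thread s x k = u ∧
      G.thread s x (k + 1) = w := by
  by_cases h2 : deg u = 2
  · obtain ⟨ha, hne⟩ := adj_otherNeighbor h2 huw
    obtain ⟨y, hy, -, hu, hw, hlen, -⟩ := exists_thread_through hconn hdeg h2 ha huw hne
    exact ⟨_, y, _, deg_threadEnd_ne_two hconn hdeg ha, hy,
      by have := threadLength_pos hconn hdeg huw; omega, hu, hw⟩
  · exact ⟨u, w, 0, h2, huw, threadLength_pos hconn hdeg huw, rfl, rfl⟩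

end Progression

section Dynamic

variable [Finite V] (hconn : G.Connected) (hmax : ∀ v, (G.neighborSet v).ncard ≤ 3)
  (h3 : ∃ v, (G.neighborSet v).ncard = 3) (hclaw : ClawFree G)
  (hA : ∀ j : ℕ, 0 < j → ¬ HasAPath G (3 * j + 1))
  (hcol : ∀ a b, G.branchGraph.Adj a b → col a ≠ col b)
include hconn hmax h3 hclaw hA hcol

theorem isArithmeticAlong_threadColoring (hs : deg s ≠ 2) (hsx : G.Adj s x) :
    G.IsArithmeticAlong (G.threadColoring col) s x := by
  have hdeg : ∃ w, deg w ≠ 2 := ⟨s, hs⟩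
  have hadj := adj_threadEnd hconn hdeg hsx
  rcases deg_eq_one_or_eq_three hmax hs hsx with h1s | h3s <;>
    rcases deg_eq_one_or_eq_three hmax (deg_threadEnd_ne_two hconn hdeg hsx) hadj with h1e | h3e
  · obtain ⟨w, hw⟩ := h3
    have := deg_le_two_of_deg_eq_one_of_deg_threadEnd_eq_one hconn hsx h1s h1e w
    omega
  · refine IsArithmeticAlong.of_reverse hconn hdeg hs hsx
      (isArithmeticAlong_of_deg_threadEnd_eq_one hconn hdeg hadj h3e ?_)
    rwa [threadEnd_threadEnd hconn hdeg hs hsx]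
  · exact isArithmeticAlong_of_deg_threadEnd_eq_one hconn hdeg hsx h3s h1e
  · by_cases hloop : G.threadEnd s x = s
    · exact isArithmeticAlong_of_threadEnd_eq hconn hdeg hclaw hsx h3s hloop
    · exact isArithmeticAlong_of_threadEnd_ne hconn hdeg hA hcol hsx h3s h3e hloop

theorem threadColoring_ne_of_adj {u w : V} (huw : G.Adj u w) :
    G.threadColoring col u ≠ G.threadColoring col w := by
  obtain ⟨v, hv⟩ := h3
  obtain ⟨s, x, k, hs, hsx, hk, rfl, rfl⟩ := exists_thread_of_adj hconn ⟨v, by omega⟩ huw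
  obtain ⟨d, hd, hc⟩ :=
    isArithmeticAlong_threadColoring hconn hmax ⟨v, hv⟩ hclaw hA hcol hs hsx
  rw [hc k hk.le, hc (k + 1) hk]
  push_cast
  intro h
  exact hd (by linear_combination -h)

theorem threadColoring_ne_of_deg_eq_two {v p q : V} (h2 : deg v = 2) (hp : G.Adj v p)
    (hq : G.Adj v q) (hpq : p ≠ q) : G.threadColoring col p ≠ G.threadColoring col q := by
  have hdeg : ∃ w, deg w ≠ 2 := h3.imp fun _ h => by omega
  obtain ⟨y, hy, hp', -, hq', hlen, -⟩ := exists_thread_through hconn hdeg h2 hp hq hpq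
  obtain ⟨d, hd, hc⟩ := isArithmeticAlong_threadColoring hconn hmax h3 hclaw hA hcol
    (deg_threadEnd_ne_two hconn hdeg hp) hy
  have hk := threadLength_pos hconn hdeg hp
  have hk' := threadLength_pos hconn hdeg hq
  rw [← hp', ← hq', hc _ (by omega), hc _ (by omega), Nat.cast_sub hk]
  push_cast
  intro h
  have h2d : (2 : ZMod 3) * d = 0 := by linear_combination -h
  exact hd ((mul_eq_zero.mp h2d).resolve_left (by decide))

end Dynamic

end ThreadColoring

end SimpleGraph

/-- A connected claw-free graph with `Δ(G) = 3` containing no `A_{3j+1}` (`j ≥ 1`)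
that has a vertex of degree 1 has a dynamic 3-coloring. -/
theorem dynamic_three_colorable_of_degree_one {V : Type*} [Fintype V]
    (G : SimpleGraph V) (hconn : G.Connected) (hclaw : ClawFree G)
    (hmax : ∀ v : V, (G.neighborSet v).ncard ≤ 3)
    (hmax' : ∃ v : V, (G.neighborSet v).ncard = 3)
    (hA : ∀ j : ℕ, 0 < j → ¬ HasAPath G (3 * j + 1))
    (hone : ∃ v : V, (G.neighborSet v).ncard = 1) :
    ∃ c : V → Fin 3, IsDynamicColoring G 3 c := by
  obtain ⟨r, hr⟩ := hone
  obtain ⟨col⟩ := G.branchGraph_colorable hconn hr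
  have hcol : ∀ a b, G.branchGraph.Adj a b → (col a : ZMod 3) ≠ col b := fun _ _ => col.valid
  refine ⟨G.threadColoring fun v => col v,
    fun u w huw => threadColoring_ne_of_adj hconn hmax hmax' hclaw hA hcol huw, fun v hv => ?_⟩
  rcases (show (G.neighborSet v).ncard = 2 ∨ (G.neighborSet v).ncard = 3 by
    have := hmax v; omega) with h2 | h3
  · obtain ⟨p, q, hpq, hN⟩ := Set.ncard_eq_two.mp h2
    have hp : G.Adj v p := by rw [← mem_neighborSet, hN]; simp
    have hq : G.Adj v q := by rw [← mem_neighborSet, hN]; simp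
    exact ⟨p, q, hp, hq,
      threadColoring_ne_of_deg_eq_two hconn hmax hmax' hclaw hA hcol h2 hp hq hpq⟩
  · obtain ⟨p, q, hp, hq, hpq⟩ := hclaw.exists_adj_adj_adj h3
    exact ⟨p, q, hp, hq, threadColoring_ne_of_adj hconn hmax hmax' hclaw hA hcol hpq⟩
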